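/- arXiv:2412.14908 — 7 statements merged into one kernel-verified Lean document; each statement's English description precedes it below -/
import Mathlib

section
/- Let φ : G → H be a unital quadratic map (φ(1) = 1 and Δ_{k₁}Δ_{k₂}Δ_{k₃} φ is identically 1 for all k₁,k₂,k₃). Define β_k(g) := φ(k)⁻¹ φ(kg) φ(g)⁻¹. Then for all k₁, k₂, g ∈ G one has β_{k₁k₂}(g) = φ(k₂)⁻¹ β_{k₁}(g) φ(k₂) · β_{k₂}(g). -/
/-- The finite difference operator `(Δₖ φ)(g) = φ(kg) φ(g)⁻¹`. -/
def fdiff {G H : Type*} [Group G] [Group H] (k : G) (φ : G → H) : G → H :=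
  fun g => φ (k * g) * (φ g)⁻¹

/-- For a unital quadratic map `φ : G → H`, setting
`βₖ(g) = φ(k)⁻¹ φ(kg) φ(g)⁻¹`, one has the twisted cocycle identity
`β_{k₁k₂}(g) = φ(k₂)⁻¹ β_{k₁}(g) φ(k₂) · β_{k₂}(g)`. -/
theorem beta_twisted_cocycle {G H : Type*} [Group G] [Group H] (φ : G → H)
    (hunital : φ 1 = 1)
    (hquad : ∀ k₁ k₂ k₃ g : G, fdiff k₁ (fdiff k₂ (fdiff k₃ φ)) g = 1)
    (β : G → G → H) (hβ : ∀ k g : G, β k g = (φ k)⁻¹ * φ (k * g) * (φ g)⁻¹) :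
    ∀ k₁ k₂ g : G,
      β (k₁ * k₂) g = (φ k₂)⁻¹ * β k₁ g * φ k₂ * β k₂ g := by
  have key : ∀ x y g : G,
      φ (x * y * g) = φ (x * y) * (φ y)⁻¹ * (φ x)⁻¹ * (φ (x * g) * (φ g)⁻¹) * φ (y * g) := by
    intro x y g
    have h := hquad g y x 1
    simp only [fdiff, mul_one, hunital, inv_one] at h
    have h' : φ (x * y * g) * (φ (y * g))⁻¹ * (φ (x * g) * (φ g)⁻¹)⁻¹ =
        φ (x * y) * (φ y)⁻¹ * (φ x)⁻¹ := by
      rw [← mul_assoc x y g] at h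
      rw [← mul_inv_eq_one]
      exact h
    calc φ (x * y * g)
        = (φ (x * y * g) * (φ (y * g))⁻¹ * (φ (x * g) * (φ g)⁻¹)⁻¹) *
            (φ (x * g) * (φ g)⁻¹) * φ (y * g) := by group
      _ = φ (x * y) * (φ y)⁻¹ * (φ x)⁻¹ * (φ (x * g) * (φ g)⁻¹) * φ (y * g) := by rw [h']
  intro k₁ k₂ g
  rw [hβ, hβ, hβ, key k₁ k₂ g]
  group
end

section
/- Let φ : G → H be a unital quadratic map and define β_k(g) := φ(k)⁻¹ φ(kg) φ(g)⁻¹. Then for every k ∈ G, the range of β_k is abelian, and the ranges of β_{k₁} and β_{k₂} commute elementwise for all k₁, k₂ ∈ G. -/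
def gam {G H : Type*} [Group G] [Group H] (φ : G → H) (a x : G) : H :=
  φ (a * x) * (φ x)⁻¹ * (φ a)⁻¹

theorem hK {G H : Type*} [Group G] [Group H] (φ : G → H)
    (hunital : φ 1 = 1)
    (hquad : ∀ k₁ k₂ k₃ g : G, fdiff k₁ (fdiff k₂ (fdiff k₃ φ)) g = 1)
    (a b g : G) :
    φ (a * (b * g)) = gam φ a b * φ (a * g) * (φ g)⁻¹ * φ (b * g) := by
  have h := hquad g b a 1
  simp only [fdiff, mul_one, hunital, inv_one, gam] at h ⊢
  calc φ (a * (b * g))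
      = (φ (a * (b * g)) * (φ (b * g))⁻¹ * (φ (a * g) * (φ g)⁻¹)⁻¹ *
          (φ (a * b) * (φ b)⁻¹ * (φ a)⁻¹)⁻¹) *
        (φ (a * b) * (φ b)⁻¹ * (φ a)⁻¹ * φ (a * g) * (φ g)⁻¹ * φ (b * g)) := by group
    _ = 1 * (φ (a * b) * (φ b)⁻¹ * (φ a)⁻¹ * φ (a * g) * (φ g)⁻¹ * φ (b * g)) := by rw [h]
    _ = _ := by rw [one_mul]

/-- γ(a, xy) = γ(a,x) γ(a,y) -/
theorem gam_mul {G H : Type*} [Group G] [Group H] (φ : G → H)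
    (hunital : φ 1 = 1)
    (hquad : ∀ k₁ k₂ k₃ g : G, fdiff k₁ (fdiff k₂ (fdiff k₃ φ)) g = 1)
    (a x y : G) :
    gam φ a (x * y) = gam φ a x * gam φ a y := by
  simp only [gam]
  rw [hK φ hunital hquad a x y]
  simp only [gam]
  group

/-- expansion of γ(ab, x) -/
theorem gam_exp {G H : Type*} [Group G] [Group H] (φ : G → H)
    (hunital : φ 1 = 1)
    (hquad : ∀ k₁ k₂ k₃ g : G, fdiff k₁ (fdiff k₂ (fdiff k₃ φ)) g = 1)
    (a b x : G) :
    gam φ (a * b) x =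
      gam φ a b * gam φ a x * (φ a * gam φ b x * (φ a)⁻¹) * (gam φ a b)⁻¹ := by
  simp only [gam]
  rw [show a * b * x = a * (b * x) by group, hK φ hunital hquad a b x]
  simp only [gam]
  group

/-- γ(a,y) commutes with φ(a) γ(b,x) φ(a)⁻¹ -/
theorem gam_comm_conj {G H : Type*} [Group G] [Group H] (φ : G → H)
    (hunital : φ 1 = 1)
    (hquad : ∀ k₁ k₂ k₃ g : G, fdiff k₁ (fdiff k₂ (fdiff k₃ φ)) g = 1)
    (a b x y : G) :
    gam φ a y * (φ a * gam φ b x * (φ a)⁻¹)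
      = (φ a * gam φ b x * (φ a)⁻¹) * gam φ a y := by
  have h3 : (gam φ a b * gam φ a x) *
      ((gam φ a y * (φ a * gam φ b x * (φ a)⁻¹)) *
        ((φ a * gam φ b y * (φ a)⁻¹) * (gam φ a b)⁻¹))
    = (gam φ a b * gam φ a x) *
      (((φ a * gam φ b x * (φ a)⁻¹) * gam φ a y) *
        ((φ a * gam φ b y * (φ a)⁻¹) * (gam φ a b)⁻¹)) := by
    calc _ = gam φ (a * b) (x * y) := by
            rw [gam_exp φ hunital hquad a b (x * y),
              gam_mul φ hunital hquad a x y, gam_mul φ hunital hquad b x y]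
            group
      _ = gam φ (a * b) x * gam φ (a * b) y := gam_mul φ hunital hquad (a * b) x y
      _ = _ := by
            rw [gam_exp φ hunital hquad a b x, gam_exp φ hunital hquad a b y]
            group
  have h4 := mul_left_cancel h3
  exact mul_right_cancel h4

/-- βₐ(y) := φ(a)⁻¹ γ(a,y) φ(a) commutes with every γ(b,x) -/
theorem beta_comm_gam {G H : Type*} [Group G] [Group H] (φ : G → H)
    (hunital : φ 1 = 1)
    (hquad : ∀ k₁ k₂ k₃ g : G, fdiff k₁ (fdiff k₂ (fdiff k₃ φ)) g = 1)
    (a b x y : G) :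
    Commute ((φ a)⁻¹ * gam φ a y * φ a) (gam φ b x) := by
  unfold Commute SemiconjBy
  calc (φ a)⁻¹ * gam φ a y * φ a * gam φ b x
      = (φ a)⁻¹ * (gam φ a y * (φ a * gam φ b x * (φ a)⁻¹)) * φ a := by group
    _ = (φ a)⁻¹ * ((φ a * gam φ b x * (φ a)⁻¹) * gam φ a y) * φ a := by
          rw [gam_comm_conj φ hunital hquad a b x y]
    _ = gam φ b x * ((φ a)⁻¹ * gam φ a y * φ a) := by group

theorem gam_inv_self {G H : Type*} [Group G] [Group H] (φ : G → H)
    (hunital : φ 1 = 1) (a : G) :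
    gam φ a⁻¹ a = (φ a)⁻¹ * (φ a⁻¹)⁻¹ := by
  simp [gam, hunital]

/-- φ(a)⁻¹ γ(b,x) φ(a) as a product of γ-values -/
theorem conj_gam_eq {G H : Type*} [Group G] [Group H] (φ : G → H)
    (hunital : φ 1 = 1)
    (hquad : ∀ k₁ k₂ k₃ g : G, fdiff k₁ (fdiff k₂ (fdiff k₃ φ)) g = 1)
    (a b x : G) :
    (φ a)⁻¹ * gam φ b x * φ a
      = gam φ a⁻¹ a *
        ((gam φ a⁻¹ x)⁻¹ * (gam φ a⁻¹ b)⁻¹ * gam φ (a⁻¹ * b) x * gam φ a⁻¹ b) *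
        (gam φ a⁻¹ a)⁻¹ := by
  rw [gam_exp φ hunital hquad a⁻¹ b x, gam_inv_self φ hunital a]
  group

theorem gam_comm_gam {G H : Type*} [Group G] [Group H] (φ : G → H)
    (hunital : φ 1 = 1)
    (hquad : ∀ k₁ k₂ k₃ g : G, fdiff k₁ (fdiff k₂ (fdiff k₃ φ)) g = 1)
    (a b x y : G) :
    Commute (gam φ a y) (gam φ b x) := by
  have hc : Commute ((φ a)⁻¹ * gam φ a y * φ a) ((φ a)⁻¹ * gam φ b x * φ a) := by
    rw [conj_gam_eq φ hunital hquad a b x]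
    have B := beta_comm_gam φ hunital hquad a
    exact ((B a⁻¹ a y).mul_right
      ((((B a⁻¹ x y).inv_right.mul_right (B a⁻¹ b y).inv_right).mul_right
        (B (a⁻¹ * b) x y)).mul_right (B a⁻¹ b y))).mul_right (B a⁻¹ a y).inv_right
  unfold Commute SemiconjBy at hc ⊢
  calc gam φ a y * gam φ b x
      = φ a * (((φ a)⁻¹ * gam φ a y * φ a) * ((φ a)⁻¹ * gam φ b x * φ a)) * (φ a)⁻¹ := by group
    _ = φ a * (((φ a)⁻¹ * gam φ b x * φ a) * ((φ a)⁻¹ * gam φ a y * φ a)) * (φ a)⁻¹ := by rw [hc]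
    _ = gam φ b x * gam φ a y := by group


/-- For a unital quadratic map `φ : G → H` and `βₖ(g) = φ(k)⁻¹ φ(kg) φ(g)⁻¹`,
the range of each `βₖ` is abelian and the ranges of `β_{k₁}` and `β_{k₂}`
commute elementwise; both claims are captured by the statement below. -/
theorem beta_ranges_commute {G H : Type*} [Group G] [Group H] (φ : G → H)
    (hunital : φ 1 = 1)
    (hquad : ∀ k₁ k₂ k₃ g : G, fdiff k₁ (fdiff k₂ (fdiff k₃ φ)) g = 1)
    (β : G → G → H) (hβ : ∀ k g : G, β k g = (φ k)⁻¹ * φ (k * g) * (φ g)⁻¹) :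
    (∀ k g₁ g₂ : G, β k g₁ * β k g₂ = β k g₂ * β k g₁) ∧
      (∀ k₁ k₂ g₁ g₂ : G, β k₁ g₁ * β k₂ g₂ = β k₂ g₂ * β k₁ g₁) := by
  have hβγ : ∀ k g : G, β k g = (φ k)⁻¹ * gam φ k g * φ k := by
    intro k g
    rw [hβ, gam]
    group
  have main : ∀ k₁ k₂ g₁ g₂ : G, β k₁ g₁ * β k₂ g₂ = β k₂ g₂ * β k₁ g₁ := by
    intro k₁ k₂ g₁ g₂
    rw [hβγ, hβγ, conj_gam_eq φ hunital hquad k₂ k₂ g₂]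
    have B := beta_comm_gam φ hunital hquad k₁
    exact (((B k₂⁻¹ k₂ g₁).mul_right
      ((((B k₂⁻¹ g₂ g₁).inv_right.mul_right (B k₂⁻¹ k₂ g₁).inv_right).mul_right
        (B (k₂⁻¹ * k₂) g₂ g₁)).mul_right (B k₂⁻¹ k₂ g₁))).mul_right
        (B k₂⁻¹ k₂ g₁).inv_right).eq
  exact ⟨fun k => main k k, main⟩
end

section
/- Let G be a group and let φ : G → H be a unital map such that ψ_{g₁}(g) := φ(g₁g)φ(g)⁻¹φ(g₁)⁻¹ is a homomorphism in g for every g₁ ∈ G. Then φ satisfies the relation φ(g₁g₂g₃) = φ(g₁g₂)φ(g₂)⁻¹φ(g₁)⁻¹ φ(g₁g₃)φ(g₃)⁻¹φ(g₂g₃) for all g₁, g₂, g₃ ∈ G; conversely, if φ is unital and satisfies this relation for all g₁, g₂, g₃, then each ψ_{g₁} is a homomorphism, i.e., φ is quadratic. -/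
/-- A unital map `φ : G → H` is quadratic (i.e. each
`ψ_{g₁}(g) = φ(g₁g)φ(g)⁻¹φ(g₁)⁻¹` is a homomorphism in `g`) if and only if it
satisfies the universal relation
`φ(g₁g₂g₃) = φ(g₁g₂)φ(g₂)⁻¹φ(g₁)⁻¹ φ(g₁g₃)φ(g₃)⁻¹φ(g₂g₃)`. -/
theorem quadratic_iff_relation {G H : Type*} [Group G] [Group H] (φ : G → H)
    (hunital : φ 1 = 1) :
    (∀ g₁ g₂ g₃ : G,
        φ (g₁ * (g₂ * g₃)) * (φ (g₂ * g₃))⁻¹ * (φ g₁)⁻¹ =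
          (φ (g₁ * g₂) * (φ g₂)⁻¹ * (φ g₁)⁻¹) *
            (φ (g₁ * g₃) * (φ g₃)⁻¹ * (φ g₁)⁻¹)) ↔
      (∀ g₁ g₂ g₃ : G,
        φ (g₁ * g₂ * g₃) =
          φ (g₁ * g₂) * (φ g₂)⁻¹ * (φ g₁)⁻¹ * φ (g₁ * g₃) * (φ g₃)⁻¹ *
            φ (g₂ * g₃)) := by
  constructor
  · intro h g₁ g₂ g₃
    have h' := h g₁ g₂ g₃
    rw [mul_inv_eq_iff_eq_mul, mul_inv_eq_iff_eq_mul] at h'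
    rw [mul_assoc, h']
    group
  · intro h g₁ g₂ g₃
    rw [← mul_assoc g₁ g₂ g₃, h]
    group
end

section
/- If G is a perfect group (G = [G,G]) and H is any group, then every unital quadratic map φ : G → H is a group homomorphism. -/
/-- The deviation from being a homomorphism. -/
def Dm {G H : Type*} [Group G] [Group H] (φ : G → H) (k g : G) : H :=
  φ (k * g) * (φ g)⁻¹ * (φ k)⁻¹

section Aux

variable {G H : Type*} [Group G] [Group H] (φ : G → H)

theorem Dm_hom (hunital : φ 1 = 1)
    (hquad : ∀ k₁ k₂ k₃ g : G, fdiff k₁ (fdiff k₂ (fdiff k₃ φ)) g = 1) :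
    ∀ k a b : G, Dm φ k (a * b) = Dm φ k a * Dm φ k b := by
  intro k a b
  have h := hquad b a k 1
  simp only [fdiff, mul_one, hunital, inv_one] at h
  rw [mul_inv_eq_one] at h
  have hX : φ (k*(a*b)) = (φ (k*a) * (φ a)⁻¹ * (φ k)⁻¹) * (φ (k*b) * (φ b)⁻¹) * φ (a*b) := by
    rw [← h]; group
  simp only [Dm]
  rw [hX]; group


theorem Dm_one (hunital : φ 1 = 1) (k : G) : Dm φ k 1 = 1 := by
  simp [Dm, hunital]

theorem Dm_inv (hunital : φ 1 = 1) (hD : ∀ k a b : G, Dm φ k (a * b) = Dm φ k a * Dm φ k b) (k a : G) : Dm φ k a⁻¹ = (Dm φ k a)⁻¹ := by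
  have h := hD k a⁻¹ a
  rw [inv_mul_cancel, Dm_one φ hunital] at h
  exact eq_inv_of_mul_eq_one_left h.symm

/-- solved form of `hD` for the nested argument -/
theorem Dm_phi (hD : ∀ k a b : G, Dm φ k (a * b) = Dm φ k a * Dm φ k b) (k k' g : G) :
    φ (k * (k' * g)) = Dm φ k k' * Dm φ k g * (φ k * φ (k' * g)) := by
  have e := hD k k' g
  simp only [Dm] at e ⊢
  rw [← e]; group

theorem Dm_conj_eq (hD : ∀ k a b : G, Dm φ k (a * b) = Dm φ k a * Dm φ k b) (k k' g : G) :
    φ k * Dm φ k' g * (φ k)⁻¹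
      = (Dm φ k g)⁻¹ * (Dm φ k k')⁻¹ * Dm φ (k * k') g * Dm φ k k' := by
  have hφ := Dm_phi φ hD k k' g
  simp only [Dm] at hφ ⊢
  rw [mul_assoc k k' g, hφ]
  group

theorem Dm_cocycle (hD : ∀ k a b : G, Dm φ k (a * b) = Dm φ k a * Dm φ k b) (k k' g : G) :
    Dm φ (k * k') g
      = Dm φ k k' * (Dm φ k g * (φ k * Dm φ k' g * (φ k)⁻¹)) * (Dm φ k k')⁻¹ := by
  rw [Dm_conj_eq φ hD]
  group

theorem Dm_comm1 (hD : ∀ k a b : G, Dm φ k (a * b) = Dm φ k a * Dm φ k b) (k k' g h : G) :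
    Dm φ k h * (φ k * Dm φ k' g * (φ k)⁻¹)
      = (φ k * Dm φ k' g * (φ k)⁻¹) * Dm φ k h := by
  have e1 : Dm φ (k*k') g * Dm φ (k*k') h
      = Dm φ k k' * ((Dm φ k g * Dm φ k h) * (φ k * (Dm φ k' g * Dm φ k' h) * (φ k)⁻¹))
          * (Dm φ k k')⁻¹ := by
    rw [← hD, ← hD, ← hD]
    exact Dm_cocycle φ hD k k' (g*h)
  have key : (Dm φ k h * (φ k * Dm φ k' g * (φ k)⁻¹)) * φ k
      = ((φ k * Dm φ k' g * (φ k)⁻¹) * Dm φ k h) * φ k := by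
    calc (Dm φ k h * (φ k * Dm φ k' g * (φ k)⁻¹)) * φ k
        = ((Dm φ k g)⁻¹ * (Dm φ k k')⁻¹)
            * (Dm φ k k' * ((Dm φ k g * Dm φ k h) * (φ k * (Dm φ k' g * Dm φ k' h) * (φ k)⁻¹))
                * (Dm φ k k')⁻¹)
            * (Dm φ k k' * φ k * (Dm φ k' h)⁻¹) := by group
      _ = ((Dm φ k g)⁻¹ * (Dm φ k k')⁻¹)
            * (Dm φ (k*k') g * Dm φ (k*k') h)
            * (Dm φ k k' * φ k * (Dm φ k' h)⁻¹) := by rw [← e1]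
      _ = ((Dm φ k g)⁻¹ * (Dm φ k k')⁻¹)
            * ((Dm φ k k' * (Dm φ k g * (φ k * Dm φ k' g * (φ k)⁻¹)) * (Dm φ k k')⁻¹)
              * (Dm φ k k' * (Dm φ k h * (φ k * Dm φ k' h * (φ k)⁻¹)) * (Dm φ k k')⁻¹))
            * (Dm φ k k' * φ k * (Dm φ k' h)⁻¹) := by
          rw [← Dm_cocycle φ hD k k' g, ← Dm_cocycle φ hD k k' h]
      _ = ((φ k * Dm φ k' g * (φ k)⁻¹) * Dm φ k h) * φ k := by group
  exact mul_right_cancel key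

/-- The subgroup generated by all deviations. -/
def Ndev : Subgroup H :=
  Subgroup.closure {x | ∃ k g : G, Dm φ k g = x}

theorem Dm_mem_Ndev (k g : G) : Dm φ k g ∈ Ndev φ :=
  Subgroup.subset_closure ⟨k, g, rfl⟩

theorem conj_gen_mem (hD : ∀ k a b : G, Dm φ k (a * b) = Dm φ k a * Dm φ k b) (x k' g : G) : φ x * Dm φ k' g * (φ x)⁻¹ ∈ Ndev φ := by
  rw [Dm_conj_eq φ hD]
  exact mul_mem (mul_mem (mul_mem (inv_mem (Dm_mem_Ndev φ x g))
    (inv_mem (Dm_mem_Ndev φ x k'))) (Dm_mem_Ndev φ (x*k') g)) (Dm_mem_Ndev φ x k')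

theorem conj_mem (hD : ∀ k a b : G, Dm φ k (a * b) = Dm φ k a * Dm φ k b) (x : G) (n : H) (hn : n ∈ Ndev φ) : φ x * n * (φ x)⁻¹ ∈ Ndev φ := by
  induction hn using Subgroup.closure_induction with
  | mem y hy => obtain ⟨k, g, rfl⟩ := hy; exact conj_gen_mem φ hD x k g
  | one => simpa using one_mem (Ndev φ)
  | mul a b _ _ ha hb =>
      have : φ x * (a * b) * (φ x)⁻¹ = (φ x * a * (φ x)⁻¹) * (φ x * b * (φ x)⁻¹) := by group
      rw [this]; exact mul_mem ha hb
  | inv a _ ha =>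
      have : φ x * a⁻¹ * (φ x)⁻¹ = (φ x * a * (φ x)⁻¹)⁻¹ := by group
      rw [this]; exact inv_mem ha

theorem phi_inv_eq (hunital : φ 1 = 1) (x : G) : φ x⁻¹ = (φ x)⁻¹ * (Dm φ x x⁻¹)⁻¹ := by
  have : Dm φ x x⁻¹ = (φ x⁻¹)⁻¹ * (φ x)⁻¹ := by
    simp [Dm, hunital]
  rw [this]; group

theorem conj_inv_mem (hunital : φ 1 = 1) (hD : ∀ k a b : G, Dm φ k (a * b) = Dm φ k a * Dm φ k b) (x : G) (n : H) (hn : n ∈ Ndev φ) : (φ x)⁻¹ * n * φ x ∈ Ndev φ := by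
  have hrw : (φ x)⁻¹ * n * φ x
      = φ x⁻¹ * (Dm φ x x⁻¹ * n * (Dm φ x x⁻¹)⁻¹) * (φ x⁻¹)⁻¹ := by
    rw [phi_inv_eq φ hunital x]; group
  rw [hrw]
  exact conj_mem φ hD x⁻¹ _
    (mul_mem (mul_mem (Dm_mem_Ndev φ x x⁻¹) hn) (inv_mem (Dm_mem_Ndev φ x x⁻¹)))

theorem B_comm_Ndev (hD : ∀ k a b : G, Dm φ k (a * b) = Dm φ k a * Dm φ k b) (k h : G) (n : H) (hn : n ∈ Ndev φ) :
    Commute ((φ k)⁻¹ * Dm φ k h * φ k) n := by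
  induction hn using Subgroup.closure_induction with
  | mem y hy =>
      obtain ⟨k', g, rfl⟩ := hy
      have h1 := Dm_comm1 φ hD k k' g h
      unfold Commute SemiconjBy
      calc ((φ k)⁻¹ * Dm φ k h * φ k) * Dm φ k' g
          = (φ k)⁻¹ * (Dm φ k h * (φ k * Dm φ k' g * (φ k)⁻¹)) * φ k := by group
        _ = (φ k)⁻¹ * ((φ k * Dm φ k' g * (φ k)⁻¹) * Dm φ k h) * φ k := by rw [h1]
        _ = Dm φ k' g * ((φ k)⁻¹ * Dm φ k h * φ k) := by group
  | one => exact Commute.one_right _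
  | mul a b _ _ ha hb => exact ha.mul_right hb
  | inv a _ ha => exact ha.inv_right

theorem Dm_comm (hunital : φ 1 = 1) (hD : ∀ k a b : G, Dm φ k (a * b) = Dm φ k a * Dm φ k b) (k a k' b : G) :
    Dm φ k a * Dm φ k' b = Dm φ k' b * Dm φ k a := by
  have hm : (φ k)⁻¹ * Dm φ k' b * φ k ∈ Ndev φ :=
    conj_inv_mem φ hunital hD k _ (Dm_mem_Ndev φ k' b)
  have hc := B_comm_Ndev φ hD k a _ hm
  unfold Commute SemiconjBy at hc
  calc Dm φ k a * Dm φ k' b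
      = φ k * (((φ k)⁻¹ * Dm φ k a * φ k) * ((φ k)⁻¹ * Dm φ k' b * φ k)) * (φ k)⁻¹ := by group
    _ = φ k * (((φ k)⁻¹ * Dm φ k' b * φ k) * ((φ k)⁻¹ * Dm φ k a * φ k)) * (φ k)⁻¹ := by rw [hc]
    _ = Dm φ k' b * Dm φ k a := by group

theorem Dm_eq_one (hunital : φ 1 = 1) (hD : ∀ k a b : G, Dm φ k (a * b) = Dm φ k a * Dm φ k b) (hperf : commutator G = ⊤) (k g : G) : Dm φ k g = 1 := by
  have hg : g ∈ Subgroup.closure (commutatorSet G) := by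
    rw [← commutator_eq_closure, hperf]; trivial
  induction hg using Subgroup.closure_induction with
  | mem y hy =>
      obtain ⟨p, q, rfl⟩ := hy
      rw [commutatorElement_def, hD, hD, hD, Dm_inv φ hunital hD, Dm_inv φ hunital hD,
        Dm_comm φ hunital hD k p k q]
      group
  | one => exact Dm_one φ hunital k
  | mul a b _ _ ha hb => rw [hD, ha, hb, mul_one]
  | inv a _ ha => rw [Dm_inv φ hunital hD, ha, inv_one]

end Aux

/-- On a perfect group, every unital quadratic map is a group homomorphism. -/
theorem unital_quadratic_on_perfect_is_hom {G H : Type*} [Group G] [Group H]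
    (hperf : commutator G = ⊤) (φ : G → H)
    (hunital : φ 1 = 1)
    (hquad : ∀ k₁ k₂ k₃ g : G, fdiff k₁ (fdiff k₂ (fdiff k₃ φ)) g = 1) :
    ∀ g h : G, φ (g * h) = φ g * φ h := by
  intro g h
  have hD := Dm_hom φ hunital hquad
  have h1 := Dm_eq_one φ hunital hD hperf g h
  simp only [Dm] at h1
  rw [mul_inv_eq_one, mul_inv_eq_iff_eq_mul] at h1
  exact h1
end

section
/- Let G be a group. The map φ' : G → (ω(G) ⊗_ℤ G^{ab}) ⋊_{ψ'} G defined by φ'(g) := (0, g) is a unital quadratic map; more precisely, for all g, h ∈ G, β'_g(h) := φ'(g)⁻¹ φ'(gh) φ'(h)⁻¹ equals ((g⁻¹−1) ⊗ h̄, 1), and in particular h ↦ β'_g(h) is a group homomorphism for every fixed g. -/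
open scoped TensorProduct

variable {G : Type*} [Group G]

/-- The module `ℤ[G] ⊗_ℤ G^{ab}` (the ambient module containing
`ω(G) ⊗_ℤ G^{ab}`, where `ω(G)` is the augmentation ideal). -/
abbrev TensMod (G : Type*) [Group G] :=
  MonoidAlgebra ℤ G ⊗[ℤ] Additive (Abelianization G)

/-- The `G`-action: left multiplication on `ℤ[G]`, trivial on `G^{ab}`. -/
noncomputable def gact (g : G) : TensMod G →ₗ[ℤ] TensMod G :=
  TensorProduct.map (LinearMap.mulLeft ℤ (MonoidAlgebra.single g (1 : ℤ)))
    LinearMap.id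

/-- The 2-cocycle `ψ'(g,h) = (g - 1) ⊗ h̄`. -/
noncomputable def psi' (g h : G) : TensMod G :=
  (MonoidAlgebra.single g (1 : ℤ) - 1) ⊗ₜ[ℤ] Additive.ofMul (Abelianization.of h)

/-- The twisted crossed product multiplication on `(ℤ[G] ⊗ G^{ab}) × G`. -/
noncomputable def tmul (x y : TensMod G × G) : TensMod G × G :=
  (x.1 + gact x.2 y.1 + psi' x.2 y.2, x.2 * y.2)

/-- `φ'(g) := (0, g)`; its inverse in the twisted crossed product is
`(-ψ'(g⁻¹, g), g⁻¹)`, and `β'_g(h) := φ'(g)⁻¹ φ'(gh) φ'(h)⁻¹`. -/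
noncomputable def beta' (g h : G) : TensMod G × G :=
  tmul (tmul (-psi' g⁻¹ g, g⁻¹) (0, g * h)) (-psi' h⁻¹ h, h⁻¹)

lemma gact_zero' (g : G) : gact g (0 : TensMod G) = 0 := (gact g).map_zero
lemma gact_add' (g : G) (x y : TensMod G) : gact g (x + y) = gact g x + gact g y :=
  (gact g).map_add x y
lemma gact_neg' (g : G) (x : TensMod G) : gact g (-x) = -gact g x := (gact g).map_neg x
lemma gact_sub' (g : G) (x y : TensMod G) : gact g (x - y) = gact g x - gact g y :=
  (gact g).map_sub x y
lemma gact_tmul' (g : G) (a : MonoidAlgebra ℤ G) (b : Additive (Abelianization G)) :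
    gact g (a ⊗ₜ[ℤ] b) = (MonoidAlgebra.single g (1 : ℤ) * a) ⊗ₜ[ℤ] b := rfl

lemma beta'_eq (g h : G) :
    beta' g h = ((MonoidAlgebra.single g⁻¹ (1 : ℤ) - 1) ⊗ₜ[ℤ]
      Additive.ofMul (Abelianization.of h), (1 : G)) := by
  unfold beta' tmul psi'
  simp only [gact_zero', gact_add', gact_neg', gact_sub', gact_tmul']
  simp only [map_zero, map_neg, TensorProduct.map_tmul, LinearMap.mulLeft_apply,
    LinearMap.id_coe, id_eq, mul_sub, mul_one, MonoidAlgebra.single_mul_single,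
    one_mul, mul_inv_cancel, inv_mul_cancel, inv_mul_cancel_left, map_mul,
    ofMul_mul, TensorProduct.tmul_add, Prod.mk.injEq, MonoidAlgebra.one_def]
  constructor
  · have h1 : Additive.ofMul (Abelianization.of h⁻¹) =
      - Additive.ofMul (Abelianization.of h) := by
      rw [map_inv]; rfl
    rw [h1]
    simp [TensorProduct.tmul_neg, TensorProduct.sub_tmul]
    abel
  · simp

/-- The map `φ'(g) = (0,g)` into the twisted crossed product
`(ω(G) ⊗_ℤ G^{ab}) ⋊_{ψ'} G` is a unital quadratic map: `β'_g(h)` equals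
`((g⁻¹ - 1) ⊗ h̄, 1)`, and in particular `h ↦ β'_g(h)` is a homomorphism. -/
theorem phi'_is_quadratic (G : Type*) [Group G] :
    (∀ g h : G,
        beta' g h =
          ((MonoidAlgebra.single g⁻¹ (1 : ℤ) - 1) ⊗ₜ[ℤ]
              Additive.ofMul (Abelianization.of h), (1 : G))) ∧
      (∀ g h₁ h₂ : G, beta' g (h₁ * h₂) = tmul (beta' g h₁) (beta' g h₂)) := by
  refine ⟨beta'_eq, fun g h₁ h₂ => ?_⟩
  rw [beta'_eq, beta'_eq, beta'_eq]
  unfold tmul psi'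
  simp only [gact_zero', gact_add', gact_neg', gact_sub', gact_tmul']
  simp [map_mul, ofMul_mul, TensorProduct.tmul_add, ← MonoidAlgebra.one_def]
end

section
/- Let n ≥ 2 and G = ℤ/2ⁿℤ with generator g. In the twisted crossed product Sym²(G) ⋊_σ G, the element (2g², 2g) satisfies (2g²,2g)^k = (2k²g², 2kg) for all k ≥ 1, hence has order 2^{n−1}; moreover the cyclic subgroups generated by (0,g) and (2g²,2g) intersect trivially, so Sym²(G) ⋊_σ G ≅ ℤ/2^{n−1}ℤ ⊕ ℤ/2^{n+1}ℤ. -/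
/-- Twisted crossed product multiplication on `Sym²(ℤ/2ⁿℤ) ⋊_σ ℤ/2ⁿℤ`, where
`Sym²(ℤ/2ⁿℤ) ≅ ℤ/2ⁿℤ` is identified via the generator `g²`, and
`σ(a,b) = a·b`. -/
def cpMul {m : ℕ} (x y : ZMod m × ZMod m) : ZMod m × ZMod m :=
  (x.1 + y.1 + x.2 * y.2, x.2 + y.2)

/-- `k`-th power in the twisted crossed product (with identity `(0,0)`). -/
def cpPow {m : ℕ} (x : ZMod m × ZMod m) : ℕ → ZMod m × ZMod m
  | 0 => (0, 0)
  | k + 1 => cpMul (cpPow x k) x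

/-- integer "choose 2" function -/
def c2 (z : ℤ) : ℤ := z * (z - 1) / 2

lemma c2_two_dvd (z : ℤ) : (2:ℤ) ∣ z * (z - 1) := by
  have h := Int.even_mul_succ_self (z - 1)
  have : (z - 1) * (z - 1 + 1) = z * (z - 1) := by ring
  rw [this] at h
  exact h.two_dvd

lemma two_c2 (z : ℤ) : 2 * c2 z = z * (z - 1) :=
  Int.mul_ediv_cancel' (c2_two_dvd z) 

lemma c2_add (u v : ℤ) : c2 (u + v) = c2 u + c2 v + u * v := by
  apply mul_left_cancel₀ (two_ne_zero : (2:ℤ) ≠ 0)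
  rw [two_c2, mul_add, mul_add, two_c2, two_c2]
  ring

lemma c2_two_mul (t : ℤ) : c2 (2 * t) = t * (2 * t - 1) := by
  apply mul_left_cancel₀ (two_ne_zero : (2:ℤ) ≠ 0)
  rw [two_c2]
  ring

lemma zmod_eq_of_dvd {m : ℕ} (x y : ℤ) (h : (m:ℤ) ∣ x - y) :
    ((x : ZMod m) = (y : ZMod m)) := by
  rw [ZMod.intCast_eq_intCast_iff]
  exact (Int.modEq_iff_dvd.mpr (by simpa using dvd_neg.mpr h))

lemma dvd_of_zmod_eq {m : ℕ} (x y : ℤ) (h : (x : ZMod m) = (y : ZMod m)) :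
    (m:ℤ) ∣ x - y := by
  rw [ZMod.intCast_eq_intCast_iff] at h
  exact (dvd_sub_comm).mp (Int.ModEq.dvd h)



/-- In `Sym²(ℤ/2ⁿℤ) ⋊_σ ℤ/2ⁿℤ` (n ≥ 2), the element `(2g², 2g)` satisfies
`(2g²,2g)^k = (2k²g², 2kg)`, has order `2^{n-1}`, generates a cyclic subgroup
meeting the one generated by `(0,g)` trivially, and the whole group is
isomorphic to `ℤ/2^{n-1}ℤ ⊕ ℤ/2^{n+1}ℤ`. -/
theorem crossed_product_cyclic_decomposition (n : ℕ) (hn : 2 ≤ n) :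
    (∀ k : ℕ, 1 ≤ k →
        cpPow ((2 : ZMod (2 ^ n)), (2 : ZMod (2 ^ n))) k =
          ((2 * k ^ 2 : ZMod (2 ^ n)), (2 * k : ZMod (2 ^ n)))) ∧
      cpPow ((2 : ZMod (2 ^ n)), 2) (2 ^ (n - 1)) = (0, 0) ∧
      (∀ k : ℕ, 0 < k → k < 2 ^ (n - 1) →
        cpPow ((2 : ZMod (2 ^ n)), 2) k ≠ (0, 0)) ∧
      (∀ j k : ℕ,
        cpPow ((0 : ZMod (2 ^ n)), 1) j = cpPow ((2 : ZMod (2 ^ n)), 2) k →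
          cpPow ((0 : ZMod (2 ^ n)), 1) j = (0, 0)) ∧
      (∃ e : ZMod (2 ^ n) × ZMod (2 ^ n) ≃ ZMod (2 ^ (n - 1)) × ZMod (2 ^ (n + 1)),
        ∀ x y, e (cpMul x y) = e x + e y) := by
  haveI : NeZero (2^n) := ⟨pow_ne_zero _ two_ne_zero⟩
  have h1 : ∀ k : ℕ, cpPow ((2 : ZMod (2^n)), (2:ZMod (2^n))) k
      = ((2*(k:ZMod (2^n))^2), (2*(k:ZMod (2^n)))) := by
    intro k
    induction k with
    | zero => simp [cpPow]
    | succ k ih =>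
      rw [cpPow, ih, cpMul]
      simp only [Prod.mk.injEq]
      constructor <;> push_cast <;> ring
  have hpn : 2 * 2^(n-1) = 2^n := by
    rw [← pow_succ']
    congr 1
    omega
  have hE : (2:ℤ)^n = 2 * 2^(n-1) := by exact_mod_cast hpn.symm
  refine ⟨fun k _ => h1 k, ?_, ?_, ?_, ?_⟩
  · rw [h1 (2^(n-1))]
    simp only [Prod.mk.injEq]
    constructor
    · have hd : ((2 * (2^(n-1))^2 : ℕ) : ZMod (2^n)) = 0 := by
        rw [ZMod.natCast_eq_zero_iff]
        refine ⟨2^(n-1), ?_⟩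
        rw [← pow_mul, ← pow_add, ← pow_succ']
        congr 1
        omega
      push_cast at hd
      exact_mod_cast hd
    · have hd : ((2 * 2^(n-1) : ℕ) : ZMod (2^n)) = 0 := by
        rw [hpn]; exact ZMod.natCast_self _
      push_cast at hd
      exact_mod_cast hd
  · intro k hk hk' h
    rw [h1 k] at h
    simp only [Prod.mk.injEq] at h
    have hd : ((2 * k : ℕ) : ZMod (2^n)) = 0 := by push_cast; exact h.2
    rw [ZMod.natCast_eq_zero_iff] at hd
    have := Nat.le_of_dvd (by omega) hd
    omega
  · -- intersection
    have h0 : ∀ j : ℕ, cpPow ((0:ZMod (2^n)), 1) j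
        = (((Nat.choose j 2 : ℕ) : ZMod (2^n)), (j:ZMod (2^n))) := by
      intro j
      induction j with
      | zero => simp [cpPow]
      | succ j ih =>
        rw [cpPow, ih, cpMul]
        simp only [Prod.mk.injEq]
        constructor
        · rw [Nat.choose_succ_succ, Nat.choose_one_right]
          push_cast
          ring
        · push_cast; ring
    intro j k hjk
    rw [h0 j, h1 k] at hjk
    rw [h0 j]
    simp only [Prod.mk.injEq] at hjk ⊢
    obtain ⟨hc, hj⟩ := hjk
    -- to ℤ
    have hjd : ((2:ℤ))^n ∣ (j:ℤ) - 2*(k:ℤ) := by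
      have := dvd_of_zmod_eq (m := 2^n) (j:ℤ) (2*(k:ℤ)) (by push_cast; exact_mod_cast hj)
      push_cast at this
      exact this
    have h2j : 2 ∣ j := by
      have h2d : (2:ℤ) ∣ (j:ℤ) - 2*k := dvd_trans ⟨2^(n-1), hE⟩ hjd
      have : (2:ℤ) ∣ (j:ℤ) := by
        obtain ⟨c, hc'⟩ := h2d
        exact ⟨k + c, by linarith⟩
      exact_mod_cast this
    obtain ⟨s, hs⟩ := h2j
    have hj2 : (j:ℤ) = 2*(s:ℤ) := by exact_mod_cast hs
    have hcval : (Nat.choose j 2 : ℤ) = 2*(s:ℤ)^2 - s := by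
      rw [Nat.choose_two_right]
      rcases Nat.eq_zero_or_pos s with h0s | h0s
      · subst h0s; simp [hs]
      · have hjv : j * (j-1) / 2 = s * (2*s - 1) := by
          rw [hs]
          have h2 : 2 * s * (2*s - 1) = 2 * (s * (2*s-1)) := by ring
          rw [h2, Nat.mul_div_cancel_left _ (by norm_num)]
        rw [hjv]
        push_cast [Nat.cast_sub (by omega : 1 ≤ 2*s)]
        ring
    have hcd : ((2:ℤ)^n) ∣ (Nat.choose j 2 : ℤ) - 2*(k:ℤ)^2 := by
      have := dvd_of_zmod_eq (m := 2^n) (Nat.choose j 2 : ℤ) (2*(k:ℤ)^2)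
        (by push_cast; exact_mod_cast hc)
      push_cast at this
      exact this
    obtain ⟨m, hm⟩ := hjd
    obtain ⟨m2, hm2⟩ := hcd
    rw [hj2, hE] at hm
    rw [hcval, hE] at hm2
    have hsk : (s:ℤ) - k = 2^(n-1) * m := by
      apply mul_left_cancel₀ (two_ne_zero : (2:ℤ) ≠ 0)
      linear_combination hm
    have hsdvd : (2:ℤ) * 2^(n-1) ∣ (s:ℤ) :=
      ⟨m*((s:ℤ)+k) - m2, by linear_combination (2*((s:ℤ)+k))*hsk - hm2⟩
    constructor
    · have : ((Nat.choose j 2 : ℤ) : ZMod (2^n)) = 0 := by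
        rw [ZMod.intCast_zmod_eq_zero_iff_dvd]
        push_cast [hE]
        rw [hcval]
        obtain ⟨c, hc'⟩ := hsdvd
        exact ⟨c*(2*(s:ℤ)-1), by linear_combination (2*(s:ℤ)-1)*hc'⟩
      exact_mod_cast this
    · have : ((j:ℤ) : ZMod (2^n)) = 0 := by
        rw [ZMod.intCast_zmod_eq_zero_iff_dvd]
        push_cast [hE]
        rw [hj2]
        obtain ⟨c, hc'⟩ := hsdvd
        exact ⟨2*c, by linear_combination 2*hc'⟩
      exact_mod_cast this
  · -- isomorphism
    haveI hA : NeZero (2^(n-1)) := ⟨pow_ne_zero _ two_ne_zero⟩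
    haveI hB : NeZero (2^(n+1)) := ⟨pow_ne_zero _ two_ne_zero⟩
    have hE2 : ((2^(n-1) : ℕ) : ℤ) = 2^(n-1) := by push_cast; ring
    have hB2 : ((2^(n+1) : ℕ) : ℤ) = 4 * 2^(n-1) := by
      push_cast
      rw [show n+1 = (n-1)+2 by omega, pow_add]
      ring
    set f : ZMod (2^n) × ZMod (2^n) → ZMod (2^(n-1)) × ZMod (2^(n+1)) := fun x =>
      ((((x.1.val : ℤ) - c2 (x.2.val : ℤ) : ℤ) : ZMod (2^(n-1))),
       (((2*(x.1.val:ℤ) - (x.2.val:ℤ)^2 : ℤ)) : ZMod (2^(n+1)))) with hf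
    have vcast : ∀ (a : ZMod (2^n)) (z : ℤ), (z : ZMod (2^n)) = a →
        ∃ t:ℤ, (a.val:ℤ) = z + 2*2^(n-1) * t := by
      intro a z h
      have h2 : ((a.val:ℤ) : ZMod (2^n)) = (z : ZMod (2^n)) := by
        rw [h]
        push_cast [ZMod.natCast_zmod_val]
        rfl
      have hd := dvd_of_zmod_eq _ _ h2
      push_cast [hE] at hd
      obtain ⟨t, ht⟩ := hd
      exact ⟨t, by linarith⟩
    have hom : ∀ x y, f (cpMul x y) = f x + f y := by
      intro x y
      obtain ⟨t1, ht1⟩ := vcast (x.1 + y.1 + x.2*y.2)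
        ((x.1.val:ℤ) + y.1.val + x.2.val * y.2.val)
        (by push_cast [ZMod.natCast_zmod_val]; ring)
      obtain ⟨t2, ht2⟩ := vcast (x.2 + y.2) ((x.2.val:ℤ) + y.2.val)
        (by push_cast [ZMod.natCast_zmod_val]; rfl)
      have hQ : (((x.2+y.2).val : ℤ)) = ((x.2.val:ℤ) + y.2.val) + 2*(2^(n-1)*t2) := by
        linarith
      have hc2Q : c2 (((x.2+y.2).val : ℤ)) =
          c2 (x.2.val:ℤ) + c2 (y.2.val:ℤ) + (x.2.val:ℤ)*(y.2.val:ℤ)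
            + 2^(n-1) * (t2*(2*2^(n-1)*t2 - 1) + 2*t2*((x.2.val:ℤ)+y.2.val)) := by
        rw [hQ, c2_add, c2_add, c2_two_mul]
        ring
      simp only [hf, cpMul, Prod.mk_add_mk, Prod.mk.injEq]
      constructor
      · rw [← Int.cast_add]
        apply zmod_eq_of_dvd
        rw [hE2]
        refine ⟨2*t1 - (t2*(2*2^(n-1)*t2 - 1) + 2*t2*((x.2.val:ℤ)+y.2.val)), ?_⟩
        rw [ht1, hc2Q]
        ring
      · rw [← Int.cast_add]
        apply zmod_eq_of_dvd
        rw [hB2]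
        refine ⟨t1 - t2*((x.2.val:ℤ)+y.2.val) - 2^(n-1)*t2^2, ?_⟩
        rw [ht1, hQ]
        ring
    have hinj : Function.Injective f := by
      intro x y hxy
      simp only [hf, Prod.mk.injEq] at hxy
      obtain ⟨hx1, hx2⟩ := hxy
      have d1 : (2:ℤ)^(n-1) ∣ ((x.1.val:ℤ) - c2 (x.2.val:ℤ)) - ((y.1.val:ℤ) - c2 (y.2.val:ℤ)) := by
        have hd := dvd_of_zmod_eq _ _ hx1
        rwa [hE2] at hd
      have d2 : (4:ℤ)*2^(n-1) ∣ (2*(x.1.val:ℤ) - (x.2.val:ℤ)^2) - (2*(y.1.val:ℤ) - (y.2.val:ℤ)^2) := by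
        have hd := dvd_of_zmod_eq _ _ hx2
        rwa [hB2] at hd
      obtain ⟨a, ha⟩ := d1
      obtain ⟨b, hb⟩ := dvd_trans (⟨2, by ring⟩ : (2:ℤ)*2^(n-1) ∣ (4:ℤ)*2^(n-1)) d2
      have dX2 : (2:ℤ)*2^(n-1) ∣ (x.2.val:ℤ) - (y.2.val:ℤ) :=
        ⟨a - b, by linear_combination 2*ha - hb + two_c2 (x.2.val:ℤ) - two_c2 (y.2.val:ℤ)⟩
      have bx2 : (x.2.val:ℤ) < 2*2^(n-1) := by rw [← hE]; exact_mod_cast ZMod.val_lt x.2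
      have by2 : (y.2.val:ℤ) < 2*2^(n-1) := by rw [← hE]; exact_mod_cast ZMod.val_lt y.2
      have nx2 : (0:ℤ) ≤ (x.2.val:ℤ) := Int.natCast_nonneg _
      have ny2 : (0:ℤ) ≤ (y.2.val:ℤ) := Int.natCast_nonneg _
      have hX2 : (x.2.val:ℤ) = (y.2.val:ℤ) := by
        have h0 := Int.eq_zero_of_abs_lt_dvd dX2
          (by rw [abs_lt]; constructor <;> linarith)
        linarith
      have ex2 : x.2 = y.2 := by
        have hv : x.2.val = y.2.val := by exact_mod_cast hX2
        rw [← ZMod.natCast_zmod_val x.2, ← ZMod.natCast_zmod_val y.2, hv]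
      obtain ⟨c, hc⟩ := d2
      have dX1 : (2:ℤ)*2^(n-1) ∣ (x.1.val:ℤ) - (y.1.val:ℤ) := by
        refine ⟨c, ?_⟩
        apply mul_left_cancel₀ (two_ne_zero : (2:ℤ) ≠ 0)
        linear_combination hc + ((x.2.val:ℤ) + y.2.val)*hX2
      have bx1 : (x.1.val:ℤ) < 2*2^(n-1) := by rw [← hE]; exact_mod_cast ZMod.val_lt x.1
      have by1 : (y.1.val:ℤ) < 2*2^(n-1) := by rw [← hE]; exact_mod_cast ZMod.val_lt y.1
      have nx1 : (0:ℤ) ≤ (x.1.val:ℤ) := Int.natCast_nonneg _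
      have ny1 : (0:ℤ) ≤ (y.1.val:ℤ) := Int.natCast_nonneg _
      have ex1 : x.1 = y.1 := by
        have h0 := Int.eq_zero_of_abs_lt_dvd dX1
          (by rw [abs_lt]; constructor <;> linarith)
        have hv : x.1.val = y.1.val := by exact_mod_cast (by linarith : (x.1.val:ℤ) = y.1.val)
        rw [← ZMod.natCast_zmod_val x.1, ← ZMod.natCast_zmod_val y.1, hv]
      exact Prod.ext ex1 ex2
    have hcard : Fintype.card (ZMod (2^n) × ZMod (2^n))
        = Fintype.card (ZMod (2^(n-1)) × ZMod (2^(n+1))) := by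
      simp only [Fintype.card_prod, ZMod.card]
      rw [← pow_add, ← pow_add]
      congr 1
      omega
    have hbij : Function.Bijective f :=
      (Fintype.bijective_iff_injective_and_card f).mpr ⟨hinj, hcard⟩
    exact ⟨Equiv.ofBijective f hbij, hom⟩
end

section
/- Let G be a group, (H, ∂) a group with a bi-invariant metric, and suppose every element of G is a product of at most k commutators. If φ : G → H is a unital map such that ∂(φ(g₃g₂g₁)·φ(g₂g₁)⁻¹·φ(g₁)·φ(g₃g₁)⁻¹·φ(g₃)·φ(g₂)·φ(g₃g₂)⁻¹, 1) ≤ ε for all g₁,g₂,g₃ ∈ G (i.e., φ is a uniform ε-polynomial of degree 2), and additionally for every g₁,g₂ ∈ G the element φ(g₁g₂)φ(g₂)⁻¹φ(g₁)⁻¹ is expressible in the free group on φ(G) as a product of at most c conjugates of degree-2-relators or their inverses, then ∂(φ(g₁g₂), φ(g₁)φ(g₂)) ≤ c·ε for all g₁,g₂ ∈ G, i.e., φ is a uniform cε-homomorphism. -/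
/-- The degree-2 relator in the free group on formal generators indexed by `G`
(the generator `FreeGroup.of g` standing for `φ(g)`):
`φ(g₁g₂g₃)⁻¹ φ(g₁g₂) φ(g₂)⁻¹ φ(g₁)⁻¹ φ(g₁g₃) φ(g₃)⁻¹ φ(g₂g₃)`. -/
def degTwoRelator {G : Type*} [Group G] (g₁ g₂ g₃ : G) : FreeGroup G :=
  (FreeGroup.of (g₁ * g₂ * g₃))⁻¹ * FreeGroup.of (g₁ * g₂) *
    (FreeGroup.of g₂)⁻¹ * (FreeGroup.of g₁)⁻¹ * FreeGroup.of (g₁ * g₃) *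
    (FreeGroup.of g₃)⁻¹ * FreeGroup.of (g₂ * g₃)

/-- Stability of approximate quadratic maps: if `φ : G → H` (with `(H, dist)`
a group with a bi-invariant metric) is a unital uniform `ε`-polynomial of
degree 2, and each linear relator `φ(g₁g₂)φ(g₂)⁻¹φ(g₁)⁻¹` is, in the free group
on `φ(G)`, a product of at most `c` conjugates of degree-2 relators or their
inverses, then `φ` is a uniform `c·ε`-homomorphism. -/
theorem approx_quadratic_is_approx_hom {G H : Type*} [Group G] [Group H]
    [MetricSpace H]
    (hright : ∀ x y z : H, dist (x * z) (y * z) = dist x y)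
    (hleft : ∀ x y z : H, dist (z * x) (z * y) = dist x y)
    (φ : G → H) (hunital : φ 1 = 1) (ε : ℝ) (c : ℕ)
    (hpoly : ∀ g₁ g₂ g₃ : G,
      dist (φ (g₃ * g₂ * g₁) * (φ (g₂ * g₁))⁻¹ * φ g₁ * (φ (g₃ * g₁))⁻¹ *
        φ g₃ * φ g₂ * (φ (g₃ * g₂))⁻¹) 1 ≤ ε)
    (hrel : ∀ g₁ g₂ : G,
      ∃ L : List (FreeGroup G × (G × G × G) × Bool), L.length ≤ c ∧
        FreeGroup.of (g₁ * g₂) * (FreeGroup.of g₂)⁻¹ * (FreeGroup.of g₁)⁻¹ =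
          (L.map fun t =>
            t.1 * (if t.2.2 then degTwoRelator t.2.1.1 t.2.1.2.1 t.2.1.2.2
              else (degTwoRelator t.2.1.1 t.2.1.2.1 t.2.1.2.2)⁻¹) * t.1⁻¹).prod) :
    ∀ g₁ g₂ : G, dist (φ (g₁ * g₂)) (φ g₁ * φ g₂) ≤ c * ε := by
  intro g₁ g₂
  have εnn : (0:ℝ) ≤ ε := le_trans dist_nonneg (hpoly 1 1 1)
  have dinv : ∀ x : H, dist x⁻¹ 1 = dist x 1 := by
    intro x
    have h := hleft x⁻¹ 1 x
    simp only [mul_inv_cancel, mul_one] at h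
    rw [← h, dist_comm]
  have cyc : ∀ x y : H, dist (x * y) 1 = dist (y * x) 1 := by
    intro x y
    have h1 := hright x y⁻¹ y
    have h2 := hleft x y⁻¹ y
    simp only [inv_mul_cancel, mul_inv_cancel] at h1 h2
    rw [h1, h2]
  have hconj : ∀ t w : H, dist (t * w * t⁻¹) 1 = dist w 1 := by
    intro t w
    rw [mul_assoc, cyc]
    simp
  -- bound for the lift of the degree-2 relator
  have key : ∀ a b c : G,
      dist ((φ (a * b * c))⁻¹ * φ (a * b) * (φ b)⁻¹ * (φ a)⁻¹ * φ (a * c) *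
        (φ c)⁻¹ * φ (b * c)) 1 ≤ ε := by
    intro a b c
    have h := hpoly c b a
    rw [← dinv]
    have heq : ((φ (a * b * c))⁻¹ * φ (a * b) * (φ b)⁻¹ * (φ a)⁻¹ * φ (a * c) *
        (φ c)⁻¹ * φ (b * c))⁻¹ =
        ((φ (b * c))⁻¹ * φ c * (φ (a * c))⁻¹ * φ a * φ b * (φ (a * b))⁻¹) *
          φ (a * b * c) := by group
    rw [heq, cyc]
    have : φ (a * b * c) * ((φ (b * c))⁻¹ * φ c * (φ (a * c))⁻¹ * φ a * φ b *
        (φ (a * b))⁻¹) = φ (a * b * c) * (φ (b * c))⁻¹ * φ c * (φ (a * c))⁻¹ *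
        φ a * φ b * (φ (a * b))⁻¹ := by group
    rw [this]
    simpa [mul_assoc] using h
  -- product bound
  have prodbound : ∀ L : List H, (∀ x ∈ L, dist x 1 ≤ ε) →
      dist L.prod 1 ≤ L.length * ε := by
    intro L
    induction L with
    | nil => simp
    | cons x xs ih =>
      intro hx
      have h1 : dist (x * xs.prod) 1 ≤ dist (x * xs.prod) xs.prod + dist xs.prod 1 :=
        dist_triangle _ _ _
      have h2 : dist (x * xs.prod) xs.prod = dist x 1 := by
        have := hright x 1 xs.prod; simpa using this
      have h3 : dist xs.prod 1 ≤ xs.length * ε := ih fun y hy => hx y (List.mem_cons_of_mem _ hy)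
      have h4 : dist x 1 ≤ ε := hx x List.mem_cons_self
      simp only [List.prod_cons, List.length_cons]
      push_cast
      calc dist (x * xs.prod) 1 ≤ dist x 1 + dist xs.prod 1 := by rw [← h2]; exact h1
        _ ≤ ε + xs.length * ε := add_le_add h4 h3
        _ = ((xs.length : ℝ) + 1) * ε := by ring
  obtain ⟨L, hlen, heq⟩ := hrel g₁ g₂
  set F : FreeGroup G →* H := FreeGroup.lift φ with hF
  have hFrel : ∀ a b c : G, F (degTwoRelator a b c) =
      (φ (a * b * c))⁻¹ * φ (a * b) * (φ b)⁻¹ * (φ a)⁻¹ * φ (a * c) *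
        (φ c)⁻¹ * φ (b * c) := by
    intro a b c
    simp [degTwoRelator, hF]
  have hmain : dist (φ (g₁ * g₂) * (φ g₂)⁻¹ * (φ g₁)⁻¹) 1 ≤ c * ε := by
    have happ := congrArg F heq
    simp only [map_mul, map_inv, hF, FreeGroup.lift_apply_of] at happ
    rw [← hF] at happ
    have hmap : F ((L.map fun t =>
        t.1 * (if t.2.2 then degTwoRelator t.2.1.1 t.2.1.2.1 t.2.1.2.2
          else (degTwoRelator t.2.1.1 t.2.1.2.1 t.2.1.2.2)⁻¹) * t.1⁻¹).prod) =
        (L.map fun t => F t.1 * (if t.2.2 then F (degTwoRelator t.2.1.1 t.2.1.2.1 t.2.1.2.2)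
          else (F (degTwoRelator t.2.1.1 t.2.1.2.1 t.2.1.2.2))⁻¹) * (F t.1)⁻¹).prod := by
      rw [map_list_prod, List.map_map]
      exact congrArg List.prod (List.map_congr_left fun t _ => by
        by_cases h : t.2.2 <;> simp [h])
    rw [hmap] at happ
    rw [happ]
    have hbound : ∀ x ∈ (L.map fun t => F t.1 *
        (if t.2.2 then F (degTwoRelator t.2.1.1 t.2.1.2.1 t.2.1.2.2)
          else (F (degTwoRelator t.2.1.1 t.2.1.2.1 t.2.1.2.2))⁻¹) * (F t.1)⁻¹), dist x 1 ≤ ε := by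
      intro x hx
      obtain ⟨t, _, rfl⟩ := List.mem_map.mp hx
      rw [hconj]
      by_cases h : t.2.2
      · rw [if_pos h, hFrel]; exact key _ _ _
      · rw [if_neg h, dinv, hFrel]; exact key _ _ _
    calc dist _ 1 ≤ _ := prodbound _ hbound
      _ ≤ c * ε := by
        rw [List.length_map]
        exact mul_le_mul_of_nonneg_right (by exact_mod_cast hlen) εnn
  have : dist (φ (g₁ * g₂)) (φ g₁ * φ g₂) =
      dist (φ (g₁ * g₂) * (φ g₂)⁻¹ * (φ g₁)⁻¹) 1 := by
    have h1 := hright (φ (g₁ * g₂) * (φ g₂)⁻¹ * (φ g₁)⁻¹) 1 (φ g₁ * φ g₂)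
    simp only [one_mul] at h1
    rw [← h1]
    congr 1
    group
  rw [this]
  exact hmain
end
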